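/- arXiv:2006.11951 — 6 statements merged into one kernel-verified Lean document; each statement's English description precedes it below -/
import Mathlib

section
/- Suppose the Grushin problem associated to bounded operators P : X₁ → X₂, R₋ : X₋ → X₂, R₊ : X₁ → X₊ is well-posed, with inverse written in block form with blocks E : X₂ → X₁, E₊ : X₊ → X₁, E₋ : X₂ → X₋, E₋₊ : X₊ → X₋. Then P is invertible (i.e. admits a bounded two-sided inverse X₂ → X₁) if and only if E₋₊ is invertible (admits a bounded two-sided inverse X₋ → X₊). -/
/-!
Write `𝒫 = [[P, R₋], [R₊, 0]]` and `ℰ = [[E, E₊], [E₋, E₋₊]]`. Comparing blocks of `ℰ 𝒫 = I` and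
`𝒫 ℰ = I` gives the usual Schur complement formulas: if `Q` inverts `P`, then `-R₊ Q R₋` inverts
`E₋₊`, and if `G` inverts `E₋₊`, then `E - E₊ G E₋` inverts `P`.
-/

namespace Grushin

variable {R X₁ X₂ Xm Xp : Type*} [Semiring R]
  [AddCommGroup X₁] [Module R X₁] [TopologicalSpace X₁]
  [AddCommGroup X₂] [Module R X₂] [TopologicalSpace X₂]
  [AddCommGroup Xm] [Module R Xm] [TopologicalSpace Xm]
  [AddCommGroup Xp] [Module R Xp] [TopologicalSpace Xp]

/-- `ℰ ∘ 𝒫 = id` for `𝒫(u, u₋) = (P u + R₋ u₋, R₊ u)` and `ℰ(v, v₊) = (E v + E₊ v₊, E₋ v + E₋₊ v₊)`. -/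
def IsLeftInverse (P : X₁ →L[R] X₂) (Rm : Xm →L[R] X₂) (Rp : X₁ →L[R] Xp)
    (E : X₂ →L[R] X₁) (Ep : Xp →L[R] X₁) (Em : X₂ →L[R] Xm) (Emp : Xp →L[R] Xm) : Prop :=
  ∀ (u : X₁) (um : Xm),
    E (P u + Rm um) + Ep (Rp u) = u ∧ Em (P u + Rm um) + Emp (Rp u) = um

/-- `𝒫 ∘ ℰ = id`, with `𝒫` and `ℰ` as in `IsLeftInverse`. -/
def IsRightInverse (P : X₁ →L[R] X₂) (Rm : Xm →L[R] X₂) (Rp : X₁ →L[R] Xp)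
    (E : X₂ →L[R] X₁) (Ep : Xp →L[R] X₁) (Em : X₂ →L[R] Xm) (Emp : Xp →L[R] Xm) : Prop :=
  ∀ (v : X₂) (vp : Xp),
    P (E v + Ep vp) + Rm (Em v + Emp vp) = v ∧ Rp (E v + Ep vp) = vp

variable {P : X₁ →L[R] X₂} {Rm : Xm →L[R] X₂} {Rp : X₁ →L[R] Xp}
  {E : X₂ →L[R] X₁} {Ep : Xp →L[R] X₁} {Em : X₂ →L[R] Xm} {Emp : Xp →L[R] Xm}

namespace IsLeftInverse

theorem E_P_add_Ep_Rp (h : IsLeftInverse P Rm Rp E Ep Em Emp) (u : X₁) :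
    E (P u) + Ep (Rp u) = u := by
  simpa using (h u 0).1

theorem Em_P_add_Emp_Rp (h : IsLeftInverse P Rm Rp E Ep Em Emp) (u : X₁) :
    Em (P u) + Emp (Rp u) = 0 := by
  simpa using (h u 0).2

theorem Em_Rm (h : IsLeftInverse P Rm Rp E Ep Em Emp) (um : Xm) : Em (Rm um) = um := by
  simpa using (h 0 um).2

theorem Emp_schur_of_rightInverse (h : IsLeftInverse P Rm Rp E Ep Em Emp) {Q : X₂ →L[R] X₁}
    (hPQ : ∀ v, P (Q v) = v) (w : Xm) : Emp (-Rp (Q (Rm w))) = w := by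
  rw [map_neg, eq_neg_of_add_eq_zero_right (h.Em_P_add_Emp_Rp _), neg_neg, hPQ, h.Em_Rm]

theorem schur_P_of_leftInverse (h : IsLeftInverse P Rm Rp E Ep Em Emp) {G : Xm →L[R] Xp}
    (hGE : ∀ w, G (Emp w) = w) (u : X₁) : E (P u) - Ep (G (Em (P u))) = u := by
  rw [eq_neg_of_add_eq_zero_left (h.Em_P_add_Emp_Rp u), map_neg, hGE, map_neg, sub_neg_eq_add,
    h.E_P_add_Ep_Rp]

end IsLeftInverse

namespace IsRightInverse

theorem P_E_add_Rm_Em (h : IsRightInverse P Rm Rp E Ep Em Emp) (v : X₂) :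
    P (E v) + Rm (Em v) = v := by
  simpa using (h v 0).1

theorem P_Ep_add_Rm_Emp (h : IsRightInverse P Rm Rp E Ep Em Emp) (vp : Xp) :
    P (Ep vp) + Rm (Emp vp) = 0 := by
  simpa using (h 0 vp).1

theorem Rp_Ep (h : IsRightInverse P Rm Rp E Ep Em Emp) (vp : Xp) : Rp (Ep vp) = vp := by
  simpa using (h 0 vp).2

theorem schur_Emp_of_leftInverse (h : IsRightInverse P Rm Rp E Ep Em Emp) {Q : X₂ →L[R] X₁}
    (hQP : ∀ u, Q (P u) = u) (w : Xp) : -Rp (Q (Rm (Emp w))) = w := by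
  rw [eq_neg_of_add_eq_zero_right (h.P_Ep_add_Rm_Emp w), map_neg, hQP, map_neg, neg_neg, h.Rp_Ep]

theorem P_schur_of_rightInverse (h : IsRightInverse P Rm Rp E Ep Em Emp) {G : Xm →L[R] Xp}
    (hEG : ∀ w, Emp (G w) = w) (v : X₂) : P (E v - Ep (G (Em v))) = v := by
  rw [map_sub, eq_neg_of_add_eq_zero_left (h.P_Ep_add_Rm_Emp _), hEG, sub_neg_eq_add,
    h.P_E_add_Rm_Em]

end IsRightInverse

end Grushin

theorem grushin_P_invertible_iff_Emp_invertible_general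
    {X₁ X₂ Xm Xp : Type*}
    [NormedAddCommGroup X₁] [NormedSpace ℂ X₁]
    [NormedAddCommGroup X₂] [NormedSpace ℂ X₂]
    [NormedAddCommGroup Xm] [NormedSpace ℂ Xm]
    [NormedAddCommGroup Xp] [NormedSpace ℂ Xp]
    (P : X₁ →L[ℂ] X₂) (Rm : Xm →L[ℂ] X₂) (Rp : X₁ →L[ℂ] Xp)
    (E : X₂ →L[ℂ] X₁) (Ep : Xp →L[ℂ] X₁) (Em : X₂ →L[ℂ] Xm) (Emp : Xp →L[ℂ] Xm)
    (hleft : ∀ (u : X₁) (um : Xm),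
      E (P u + Rm um) + Ep (Rp u) = u ∧ Em (P u + Rm um) + Emp (Rp u) = um)
    (hright : ∀ (v : X₂) (vp : Xp),
      P (E v + Ep vp) + Rm (Em v + Emp vp) = v ∧ Rp (E v + Ep vp) = vp) :
    (∃ Q : X₂ →L[ℂ] X₁, (∀ u, Q (P u) = u) ∧ (∀ v, P (Q v) = v)) ↔
      (∃ G : Xm →L[ℂ] Xp, (∀ w, G (Emp w) = w) ∧ (∀ w, Emp (G w) = w)) := by
  have hℰ𝒫 : Grushin.IsLeftInverse P Rm Rp E Ep Em Emp := hleft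
  have h𝒫ℰ : Grushin.IsRightInverse P Rm Rp E Ep Em Emp := hright
  constructor
  · rintro ⟨Q, hQP, hPQ⟩
    exact ⟨-(Rp ∘L Q ∘L Rm), h𝒫ℰ.schur_Emp_of_leftInverse hQP,
      hℰ𝒫.Emp_schur_of_rightInverse hPQ⟩
  · rintro ⟨G, hGE, hEG⟩
    exact ⟨E - Ep ∘L G ∘L Em, hℰ𝒫.schur_P_of_leftInverse hGE, h𝒫ℰ.P_schur_of_rightInverse hEG⟩

/-- **Grushin problem: P is invertible iff E₋₊ is invertible.**
The Grushin problem `𝒫(u, u₋) = (P u + R₋ u₋, R₊ u)` is assumed well-posed,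
with inverse `ℰ(v, v₊) = (E v + E₊ v₊, E₋ v + E₋₊ v₊)`. -/
theorem grushin_P_invertible_iff_Emp_invertible
    {X₁ X₂ Xm Xp : Type*}
    [NormedAddCommGroup X₁] [NormedSpace ℂ X₁] [CompleteSpace X₁]
    [NormedAddCommGroup X₂] [NormedSpace ℂ X₂] [CompleteSpace X₂]
    [NormedAddCommGroup Xm] [NormedSpace ℂ Xm] [CompleteSpace Xm]
    [NormedAddCommGroup Xp] [NormedSpace ℂ Xp] [CompleteSpace Xp]
    (P : X₁ →L[ℂ] X₂) (Rm : Xm →L[ℂ] X₂) (Rp : X₁ →L[ℂ] Xp)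
    (E : X₂ →L[ℂ] X₁) (Ep : Xp →L[ℂ] X₁) (Em : X₂ →L[ℂ] Xm) (Emp : Xp →L[ℂ] Xm)
    (hleft : ∀ (u : X₁) (um : Xm),
      E (P u + Rm um) + Ep (Rp u) = u ∧ Em (P u + Rm um) + Emp (Rp u) = um)
    (hright : ∀ (v : X₂) (vp : Xp),
      P (E v + Ep vp) + Rm (Em v + Emp vp) = v ∧ Rp (E v + Ep vp) = vp) :
    (∃ Q : X₂ →L[ℂ] X₁, (∀ u, Q (P u) = u) ∧ (∀ v, P (Q v) = v)) ↔
      (∃ G : Xm →L[ℂ] Xp, (∀ w, G (Emp w) = w) ∧ (∀ w, Emp (G w) = w)) :=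
  grushin_P_invertible_iff_Emp_invertible_general P Rm Rp E Ep Em Emp hleft hright
end

section
/- Suppose the Grushin problem associated to bounded operators P : X₁ → X₂, R₋ : X₋ → X₂, R₊ : X₁ → X₊ is well-posed with inverse blocks E, E₊, E₋, E₋₊. Let B : X₁ → X₂ be a bounded operator such that ‖E B‖_{X₁→X₁} < 1 and ‖B E‖_{X₂→X₂} < 1. Then the Grushin problem associated to P + B (with the same R₋, R₊) is well-posed, and its lower-right inverse block F₋₊ : X₊ → X₋ is given by the norm-convergent series F₋₊ = E₋₊ + Σ_{ℓ=1}^∞ (−1)^ℓ E₋ B (E B)^{ℓ−1} E₊. -/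
/-!
Put `x = (1 + E B)⁻¹ (E v + E₊ v₊)`. Then `x = E (v - B x) + E₊ v₊`, so the perturbed problem
with data `(v, v₊)` is the unperturbed one with data `(v - B x, v₊)`. This produces the inverse
blocks `F = (1 + E B)⁻¹ E`, `F₊ = (1 + E B)⁻¹ E₊`, `F₋ = E₋ - E₋ B F`, `F₋₊ = E₋₊ - E₋ B F₊`,
and expanding `(1 + E B)⁻¹` as a Neumann series turns the formula for `F₋₊` into the series.
-/

section

variable {R X₁ X₂ Xm Xp : Type*} [Ring R]
  [AddCommGroup X₁] [Module R X₁] [TopologicalSpace X₁] [IsTopologicalAddGroup X₁]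
  [AddCommGroup X₂] [Module R X₂] [TopologicalSpace X₂] [ContinuousAdd X₂]
  [AddCommGroup Xm] [Module R Xm] [TopologicalSpace Xm] [IsTopologicalAddGroup Xm]
  [AddCommGroup Xp] [Module R Xp] [TopologicalSpace Xp]

def IsGrushinInverse (P : X₁ →L[R] X₂) (Rm : Xm →L[R] X₂) (Rp : X₁ →L[R] Xp)
    (E : X₂ →L[R] X₁) (Ep : Xp →L[R] X₁) (Em : X₂ →L[R] Xm) (Emp : Xp →L[R] Xm) : Prop :=
  (∀ (u : X₁) (um : Xm),
    E (P u + Rm um) + Ep (Rp u) = u ∧ Em (P u + Rm um) + Emp (Rp u) = um) ∧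
  (∀ (v : X₂) (vp : Xp),
    P (E v + Ep vp) + Rm (Em v + Emp vp) = v ∧ Rp (E v + Ep vp) = vp)

theorem IsGrushinInverse.add {P : X₁ →L[R] X₂} {Rm : Xm →L[R] X₂} {Rp : X₁ →L[R] Xp}
    {E : X₂ →L[R] X₁} {Ep : Xp →L[R] X₁} {Em : X₂ →L[R] Xm} {Emp : Xp →L[R] Xm}
    (h : IsGrushinInverse P Rm Rp E Ep Em Emp) (B : X₁ →L[R] X₂) {A : X₁ →L[R] X₁}
    (hA_left : A * (1 + E.comp B) = 1) (hA_right : (1 + E.comp B) * A = 1) :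
    IsGrushinInverse (P + B) Rm Rp (A.comp E) (A.comp Ep)
      (Em - (Em.comp B).comp (A.comp E)) (Emp - (Em.comp B).comp (A.comp Ep)) := by
  have hAl (x : X₁) : A (x + E (B x)) = x := congr($hA_left x)
  have hAr (x : X₁) : A x + E (B (A x)) = x := congr($hA_right x)
  constructor
  · intro u um
    obtain ⟨hE, hEm⟩ := h.1 u um
    have hF : A (E ((P + B) u + Rm um)) + A (Ep (Rp u)) = u := calc
      _ = A (E (P u + Rm um) + Ep (Rp u) + E (B u)) := by
        rw [← map_add, add_apply, add_right_comm (P u), map_add E _ (B u),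
          add_right_comm (E _)]
      _ = u := by rw [hE, hAl]
    refine ⟨hF, ?_⟩
    calc _ = Em (P u + Rm um) + Emp (Rp u) + Em (B u)
          - Em (B (A (E ((P + B) u + Rm um)) + A (Ep (Rp u)))) := by
          simp only [sub_apply, ContinuousLinearMap.comp_apply, add_apply, map_add]
          abel
      _ = um := by rw [hEm, hF, add_sub_cancel_right]
  · intro v vp
    set x := A (E v + Ep vp)
    have hx : E (v - B x) + Ep vp = x := by
      rw [map_sub, sub_add_eq_add_sub, ← hAr (E v + Ep vp), add_sub_cancel_right]
    obtain ⟨hP, hRp⟩ := h.2 (v - B x) vp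
    rw [hx] at hP hRp
    have hFx : A (E v) + A (Ep vp) = x := (map_add A _ _).symm
    have hFmy : Em v - Em (B (A (E v))) + (Emp vp - Em (B (A (Ep vp)))) =
        Em (v - B x) + Emp vp := by
      rw [← hFx]
      simp only [map_sub, map_add]
      abel
    simp only [sub_apply, ContinuousLinearMap.comp_apply, add_apply, hFx, hFmy, hRp,
      and_true]
    rw [add_right_comm, hP, sub_add_cancel]

end

section

variable {𝕜 X₁ Xm Xp : Type*} [NontriviallyNormedField 𝕜]
  [NormedAddCommGroup X₁] [NormedSpace 𝕜 X₁] [CompleteSpace X₁]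
  [NormedAddCommGroup Xm] [NormedSpace 𝕜 Xm]
  [NormedAddCommGroup Xp] [NormedSpace 𝕜 Xp]

theorem hasSum_neg_one_pow_succ_smul_comp_pow_comp (L : X₁ →L[𝕜] Xm) (T : X₁ →L[𝕜] X₁)
    (M : Xp →L[𝕜] X₁) (hT : ‖T‖ < 1) :
    HasSum (fun ℓ : ℕ => (-1 : 𝕜) ^ (ℓ + 1) • L.comp ((T ^ ℓ).comp M))
      (-L.comp ((∑' n : ℕ, (-T) ^ n).comp M)) := by
  let Φ : (X₁ →L[𝕜] X₁) →L[𝕜] (Xp →L[𝕜] Xm) :=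
    -(ContinuousLinearMap.compL 𝕜 Xp X₁ Xm L ∘L (ContinuousLinearMap.compL 𝕜 Xp X₁ X₁).flip M)
  have hΦ (S : X₁ →L[𝕜] X₁) : Φ S = -L.comp (S.comp M) := rfl
  have hgeom : HasSum (fun n : ℕ => (-T) ^ n) (∑' n : ℕ, (-T) ^ n) :=
    (summable_geometric_of_norm_lt_one (by rwa [norm_neg])).hasSum
  have hterm (ℓ : ℕ) : Φ ((-T) ^ ℓ) = (-1 : 𝕜) ^ (ℓ + 1) • L.comp ((T ^ ℓ).comp M) := by
    rw [hΦ, ← neg_one_smul 𝕜 T, smul_pow, ContinuousLinearMap.smul_comp,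
      ContinuousLinearMap.comp_smul, pow_succ, mul_neg_one, neg_smul]
  simpa only [hterm, hΦ] using hgeom.mapL Φ

end

theorem grushin_perturbation_series_general
    {X₁ X₂ Xm Xp : Type*}
    [NormedAddCommGroup X₁] [NormedSpace ℂ X₁] [CompleteSpace X₁]
    [NormedAddCommGroup X₂] [NormedSpace ℂ X₂]
    [NormedAddCommGroup Xm] [NormedSpace ℂ Xm]
    [NormedAddCommGroup Xp] [NormedSpace ℂ Xp]
    (P : X₁ →L[ℂ] X₂) (Rm : Xm →L[ℂ] X₂) (Rp : X₁ →L[ℂ] Xp)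
    (E : X₂ →L[ℂ] X₁) (Ep : Xp →L[ℂ] X₁) (Em : X₂ →L[ℂ] Xm) (Emp : Xp →L[ℂ] Xm)
    (hleft : ∀ (u : X₁) (um : Xm),
      E (P u + Rm um) + Ep (Rp u) = u ∧ Em (P u + Rm um) + Emp (Rp u) = um)
    (hright : ∀ (v : X₂) (vp : Xp),
      P (E v + Ep vp) + Rm (Em v + Emp vp) = v ∧ Rp (E v + Ep vp) = vp)
    (B : X₁ →L[ℂ] X₂)
    (hEB : ‖E.comp B‖ < 1) :
    ∃ (F : X₂ →L[ℂ] X₁) (Fp : Xp →L[ℂ] X₁) (Fm : X₂ →L[ℂ] Xm) (Fmp : Xp →L[ℂ] Xm),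
      (∀ (u : X₁) (um : Xm),
        F ((P + B) u + Rm um) + Fp (Rp u) = u ∧ Fm ((P + B) u + Rm um) + Fmp (Rp u) = um) ∧
      (∀ (v : X₂) (vp : Xp),
        (P + B) (F v + Fp vp) + Rm (Fm v + Fmp vp) = v ∧ Rp (F v + Fp vp) = vp) ∧
      Summable (fun ℓ : ℕ =>
        ((-1 : ℂ) ^ (ℓ + 1)) • (Em.comp (B.comp (((E.comp B) ^ ℓ).comp Ep)))) ∧
      Fmp = Emp + ∑' ℓ : ℕ,
        ((-1 : ℂ) ^ (ℓ + 1)) • (Em.comp (B.comp (((E.comp B) ^ ℓ).comp Ep))) := by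
  set A := ∑' n : ℕ, (-(E.comp B)) ^ n
  have hnorm : ‖-(E.comp B)‖ < 1 := by rwa [norm_neg]
  have hseries : HasSum (fun ℓ : ℕ =>
      ((-1 : ℂ) ^ (ℓ + 1)) • (Em.comp (B.comp (((E.comp B) ^ ℓ).comp Ep))))
      (-(Em.comp B).comp (A.comp Ep)) :=
    hasSum_neg_one_pow_succ_smul_comp_pow_comp (Em.comp B) (E.comp B) Ep hEB
  obtain ⟨hleft', hright'⟩ := IsGrushinInverse.add ⟨hleft, hright⟩ B (A := A)
    (by simpa only [sub_neg_eq_add] using geom_series_mul_neg _ hnorm)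
    (by simpa only [sub_neg_eq_add] using mul_neg_geom_series _ hnorm)
  exact ⟨_, _, _, _, hleft', hright', hseries.summable, by rw [hseries.tsum_eq, sub_eq_add_neg]⟩

/-- **Perturbed Grushin problem (Lemma C.3 of Dyatlov–Zworski).**
If the Grushin problem for `P` is well-posed with inverse blocks `E, E₊, E₋, E₋₊`,
and `B` is a bounded operator with `‖E B‖ < 1` and `‖B E‖ < 1`, then the Grushin
problem for `P + B` (with the same `R₋, R₊`) is well-posed, and its lower-right
inverse block is `F₋₊ = E₋₊ + Σ_{ℓ≥1} (−1)^ℓ E₋ B (E B)^{ℓ−1} E₊`,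
the series being norm-convergent (summable). -/
theorem grushin_perturbation_series
    {X₁ X₂ Xm Xp : Type*}
    [NormedAddCommGroup X₁] [NormedSpace ℂ X₁] [CompleteSpace X₁]
    [NormedAddCommGroup X₂] [NormedSpace ℂ X₂] [CompleteSpace X₂]
    [NormedAddCommGroup Xm] [NormedSpace ℂ Xm] [CompleteSpace Xm]
    [NormedAddCommGroup Xp] [NormedSpace ℂ Xp] [CompleteSpace Xp]
    (P : X₁ →L[ℂ] X₂) (Rm : Xm →L[ℂ] X₂) (Rp : X₁ →L[ℂ] Xp)
    (E : X₂ →L[ℂ] X₁) (Ep : Xp →L[ℂ] X₁) (Em : X₂ →L[ℂ] Xm) (Emp : Xp →L[ℂ] Xm)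
    (hleft : ∀ (u : X₁) (um : Xm),
      E (P u + Rm um) + Ep (Rp u) = u ∧ Em (P u + Rm um) + Emp (Rp u) = um)
    (hright : ∀ (v : X₂) (vp : Xp),
      P (E v + Ep vp) + Rm (Em v + Emp vp) = v ∧ Rp (E v + Ep vp) = vp)
    (B : X₁ →L[ℂ] X₂)
    (hEB : ‖E.comp B‖ < 1) (hBE : ‖B.comp E‖ < 1) :
    ∃ (F : X₂ →L[ℂ] X₁) (Fp : Xp →L[ℂ] X₁) (Fm : X₂ →L[ℂ] Xm) (Fmp : Xp →L[ℂ] Xm),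
      (∀ (u : X₁) (um : Xm),
        F ((P + B) u + Rm um) + Fp (Rp u) = u ∧ Fm ((P + B) u + Rm um) + Fmp (Rp u) = um) ∧
      (∀ (v : X₂) (vp : Xp),
        (P + B) (F v + Fp vp) + Rm (Fm v + Fmp vp) = v ∧ Rp (F v + Fp vp) = vp) ∧
      Summable (fun ℓ : ℕ =>
        ((-1 : ℂ) ^ (ℓ + 1)) • (Em.comp (B.comp (((E.comp B) ^ ℓ).comp Ep)))) ∧
      Fmp = Emp + ∑' ℓ : ℕ,
        ((-1 : ℂ) ^ (ℓ + 1)) • (Em.comp (B.comp (((E.comp B) ^ ℓ).comp Ep))) :=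
  grushin_perturbation_series_general P Rm Rp E Ep Em Emp hleft hright B hEB
end

section
/- Let X be a complex Banach space, P : X → X a bounded operator, λ, ζ ∈ ℂ, m ≥ 1, and let u₁, …, u_m ∈ X and bounded linear functionals φ₁, …, φ_m ∈ X* satisfy φ_i(u_j) = δ_{ij}, P u_j = λ u_j, and φ_j ∘ P = λ φ_j for all i, j. Let Π : X → X be the projection Π v = Σ_{j=1}^m φ_j(v) u_j, and suppose A : X → X is a bounded operator with (P − ζ) A = A (P − ζ) = I − Π, A u_j = 0, and φ_j ∘ A = 0 for all j. Define R₋ : ℂ^m → X by R₋ w = Σ_j w_j u_j and R₊ : X → ℂ^m by R₊ v = (φ₁(v), …, φ_m(v)). Then the block operator 𝒫 : X × ℂ^m → X × ℂ^m, 𝒫(u, u₋) = ((P − ζ) u + R₋ u₋, R₊ u), is invertible, with inverse ℰ(v, v₊) = (A v + Σ_j v₊^j u_j, (φ_j(v))_j + (ζ − λ) v₊). -/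
/-!
`X` splits as `ker Π ⊕ span {u_j}`, and `P - ζ` respects the splitting: on `ker Π` it is
inverted by `A`, on `span {u_j}` it is multiplication by `λ - ζ`, with the `φ_j` as coordinates.
Both composites of the block operators are then checked summand by summand.
-/

open Finset

section Biorthogonal

variable {ι R M F : Type*} [Fintype ι]

theorem apply_sum_smul_of_biorthogonal [DecidableEq ι] [Semiring R] [AddCommMonoid M]
    [Module R M] [FunLike F M R] [LinearMapClass F R M R] {φ : ι → F} {u : ι → M}
    (hdual : ∀ i j, φ i (u j) = if i = j then 1 else 0) (c : ι → R) (i : ι) :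
    φ i (∑ j, c j • u j) = c i := by
  simp [map_sum, hdual]

theorem apply_sub_smul_sum_smul_of_eigen [CommRing R] [AddCommGroup M] [Module R M]
    [FunLike F M M] [LinearMapClass F R M M] {P : F} {lam : R} {u : ι → M}
    (heig : ∀ j, P (u j) = lam • u j) (ζ : R) (c : ι → R) :
    P (∑ j, c j • u j) - ζ • ∑ j, c j • u j = ∑ j, ((lam - ζ) * c j) • u j := by
  simp only [map_sum, map_smul, heig, smul_sum, ← sum_sub_distrib, smul_smul, ← sub_smul]
  congr! 2
  ring

end Biorthogonal

theorem grushin_at_eigenvalue_general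
    {X : Type*} [NormedAddCommGroup X] [NormedSpace ℂ X]
    (P : X →L[ℂ] X) (lam ζ : ℂ) (m : ℕ)
    (u : Fin m → X) (φ : Fin m → (X →L[ℂ] ℂ))
    (hdual : ∀ i j, φ i (u j) = if i = j then 1 else 0)
    (heig : ∀ j, P (u j) = lam • u j)
    (hcoeig : ∀ j x, φ j (P x) = lam * φ j x)
    (A : X →L[ℂ] X)
    (hPA : ∀ v, P (A v) - ζ • A v = v - ∑ j, φ j v • u j)
    (hAP : ∀ v, A (P v - ζ • v) = v - ∑ j, φ j v • u j)
    (hAu : ∀ j, A (u j) = 0)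
    (hφA : ∀ j v, φ j (A v) = 0) :
    (∀ (w : X) (wm : Fin m → ℂ),
      A ((P w - ζ • w) + ∑ j, wm j • u j) + ∑ j, φ j w • u j = w ∧
      ∀ j, φ j ((P w - ζ • w) + ∑ i, wm i • u i) + (ζ - lam) * φ j w = wm j) ∧
    (∀ (v : X) (vp : Fin m → ℂ),
      (P (A v + ∑ j, vp j • u j) - ζ • (A v + ∑ j, vp j • u j))
          + ∑ j, (φ j v + (ζ - lam) * vp j) • u j = v ∧
      ∀ j, φ j (A v + ∑ i, vp i • u i) = vp j) := by
  refine ⟨fun w wm => ⟨?_, fun j => ?_⟩, fun v vp => ⟨?_, fun j => ?_⟩⟩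
  · simp [map_sum, hAP, hAu]
  · rw [map_add, map_sub, map_smul, hcoeig, apply_sum_smul_of_biorthogonal hdual, smul_eq_mul]
    ring
  · have hsplit : P (A v + ∑ j, vp j • u j) - ζ • (A v + ∑ j, vp j • u j)
        = (P (A v) - ζ • A v) + (P (∑ j, vp j • u j) - ζ • ∑ j, vp j • u j) := by
      rw [map_add, smul_add]
      abel
    rw [hsplit, hPA, apply_sub_smul_sum_smul_of_eigen heig]
    simp only [add_smul, sum_add_distrib, ← neg_sub lam ζ, neg_mul, neg_smul, sum_neg_distrib]
    abel
  · rw [map_add, hφA, apply_sum_smul_of_biorthogonal hdual, zero_add]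

/-- **The Grushin problem at an eigenvalue of multiplicity m.**
With `u₁, …, u_m` eigenvectors, `φ₁, …, φ_m` dual (co-)eigenfunctionals,
`Π v = Σ φ_j(v) u_j` and `A` a "regular part" of the resolvent at `ζ`, the block
operator `𝒫(u, u₋) = ((P − ζ)u + Σ u₋ʲ u_j, (φ_j u)_j)` is invertible with inverse
`ℰ(v, v₊) = (A v + Σ v₊ʲ u_j, (φ_j v)_j + (ζ − λ) v₊)`. -/
theorem grushin_at_eigenvalue
    {X : Type*} [NormedAddCommGroup X] [NormedSpace ℂ X] [CompleteSpace X]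
    (P : X →L[ℂ] X) (lam ζ : ℂ) (m : ℕ) (hm : 1 ≤ m)
    (u : Fin m → X) (φ : Fin m → (X →L[ℂ] ℂ))
    (hdual : ∀ i j, φ i (u j) = if i = j then 1 else 0)
    (heig : ∀ j, P (u j) = lam • u j)
    (hcoeig : ∀ j x, φ j (P x) = lam * φ j x)
    (A : X →L[ℂ] X)
    (hPA : ∀ v, P (A v) - ζ • A v = v - ∑ j, φ j v • u j)
    (hAP : ∀ v, A (P v - ζ • v) = v - ∑ j, φ j v • u j)
    (hAu : ∀ j, A (u j) = 0)
    (hφA : ∀ j v, φ j (A v) = 0) :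
    (∀ (w : X) (wm : Fin m → ℂ),
      A ((P w - ζ • w) + ∑ j, wm j • u j) + ∑ j, φ j w • u j = w ∧
      ∀ j, φ j ((P w - ζ • w) + ∑ i, wm i • u i) + (ζ - lam) * φ j w = wm j) ∧
    (∀ (v : X) (vp : Fin m → ℂ),
      (P (A v + ∑ j, vp j • u j) - ζ • (A v + ∑ j, vp j • u j))
          + ∑ j, (φ j v + (ζ - lam) * vp j) • u j = v ∧
      ∀ j, φ j (A v + ∑ i, vp i • u i) = vp j) :=
  grushin_at_eigenvalue_general P lam ζ m u φ hdual heig hcoeig A hPA hAP hAu hφA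
end

section
/- Let X be a complex Banach space, m ≥ 1, and let R₋ : ℂ^m → X and R₊ : X → ℂ^m be fixed bounded operators. Let s ↦ P(s) be a twice continuously differentiable map from an open interval I around 0 into the bounded operators on X (with the operator norm), and suppose that for every s ∈ I the Grushin problem 𝒫(s)(u, u₋) = (P(s) u + R₋ u₋, R₊ u) is well-posed, with inverse blocks E(s) : X → X, E₊(s) : ℂ^m → X, E₋(s) : X → ℂ^m, E₋₊(s) : ℂ^m → ℂ^m. Then s ↦ E₋₊(s) is twice continuously differentiable and, writing Ṗ = P'(0), P̈ = P''(0) and E = E(0), E₊ = E₊(0), E₋ = E₋(0), one has (d/ds)E₋₊(0) = − E₋ Ṗ E₊ and (d²/ds²)E₋₊(0) = 2 E₋ Ṗ E Ṗ E₊ − E₋ P̈ E₊. -/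
/-!
Put the two block operators `𝒫(s) = [[P(s), R₋], [R₊, 0]]` and `ℰ(s) = [[E(s), E₊(s)], [E₋(s), E₋₊(s)]]`
in the Banach algebra of bounded operators on `X × ℂ^m`. Well-posedness says `ℰ(s) = 𝒫(s)⁻¹`,
so `ℰ` is `C²` because inversion is smooth on the units, and differentiating `ℰ 𝒫 = 1` gives
`ℰ' = -ℰ 𝒫' ℰ` and `ℰ'' = 2 ℰ 𝒫' ℰ 𝒫' ℰ - ℰ 𝒫'' ℰ`. Since `𝒫' = [[Ṗ, 0], [0, 0]]`, taking the
bottom-right corner `E₋₊` of these identities yields the two formulas.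
-/

open ContinuousLinearMap Filter Topology Set

lemma ringInverse_eqOn_of_mul_eq_one {α A : Type*} [MonoidWithZero A] {p q : α → A} {U : Set α}
    (hinv : ∀ t ∈ U, q t * p t = 1 ∧ p t * q t = 1) :
    EqOn (fun t => Ring.inverse (p t)) q U := fun t ht =>
  Ring.inverse_unit ⟨p t, q t, (hinv t ht).2, (hinv t ht).1⟩

section InverseFamily

variable {𝕜 : Type*} [NontriviallyNormedField 𝕜] {A : Type*} [NormedRing A] [NormedAlgebra 𝕜 A]
  [CompleteSpace A] {p q : 𝕜 → A} {U : Set 𝕜}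

lemma contDiffOn_of_mul_eq_one {n : WithTop ℕ∞} (hp : ContDiffOn 𝕜 n p U)
    (hinv : ∀ t ∈ U, q t * p t = 1 ∧ p t * q t = 1) : ContDiffOn 𝕜 n q U := by
  intro t ht
  have hunit := contDiffAt_ringInverse 𝕜 (n := n) ⟨p t, q t, (hinv t ht).2, (hinv t ht).1⟩
  exact (hunit.comp_contDiffWithinAt t (hp t ht)).congr
    (ringInverse_eqOn_of_mul_eq_one hinv).symm (ringInverse_eqOn_of_mul_eq_one hinv ht).symm

lemma hasDerivAt_of_mul_eq_one {s : 𝕜} {p' : A} (hU : U ∈ 𝓝 s)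
    (hinv : ∀ t ∈ U, q t * p t = 1 ∧ p t * q t = 1) (hp : HasDerivAt p p' s) :
    HasDerivAt q (-(q s * p' * q s)) s := by
  have hs := mem_of_mem_nhds hU
  have h := (hasFDerivAt_ringInverse (𝕜 := 𝕜)
    ⟨p s, q s, (hinv s hs).2, (hinv s hs).1⟩).comp_hasDerivAt s hp
  exact h.congr_of_eventuallyEq
    (eventuallyEq_of_mem hU (ringInverse_eqOn_of_mul_eq_one hinv)).symm

lemma hasDerivAt_deriv_of_mul_eq_one {s : 𝕜} {p' : 𝕜 → A} {p'' : A} (hU : IsOpen U) (hs : s ∈ U)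
    (hinv : ∀ t ∈ U, q t * p t = 1 ∧ p t * q t = 1) (hp : ∀ t ∈ U, HasDerivAt p (p' t) t)
    (hp' : HasDerivAt p' p'' s) :
    HasDerivAt (deriv q) (2 * (q s * p' s * q s * p' s * q s) - q s * p'' * q s) s := by
  have hq : ∀ t ∈ U, HasDerivAt q (-(q t * p' t * q t)) t := fun t ht =>
    hasDerivAt_of_mul_eq_one (hU.mem_nhds ht) hinv (hp t ht)
  have hderiv : deriv q =ᶠ[𝓝 s] fun t => -(q t * p' t * q t) :=
    eventuallyEq_of_mem (hU.mem_nhds hs) fun t ht => (hq t ht).deriv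
  have h := (((hq s hs).mul hp').mul (hq s hs)).neg
  refine (h.congr_of_eventuallyEq hderiv).congr_deriv ?_
  simp only [Pi.mul_apply]
  noncomm_ring

end InverseFamily

lemma hasDerivAt_deriv_clm_comp {𝕜 F G : Type*} [NontriviallyNormedField 𝕜] [NormedAddCommGroup F]
    [NormedSpace 𝕜 F] [NormedAddCommGroup G] [NormedSpace 𝕜 G] (L : F →L[𝕜] G) {f : 𝕜 → F}
    {s : 𝕜} {f'' : F} (hf : ∀ᶠ t in 𝓝 s, DifferentiableAt 𝕜 f t)
    (hf' : HasDerivAt (deriv f) f'' s) :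
    HasDerivAt (deriv fun t => L (f t)) (L f'') s := by
  have hderiv : deriv (fun t => L (f t)) =ᶠ[𝓝 s] fun t => L (deriv f t) :=
    hf.mono fun t ht => (L.hasFDerivAt.comp_hasDerivAt t ht.hasDerivAt).deriv
  exact (L.hasFDerivAt.comp_hasDerivAt s hf').congr_of_eventuallyEq hderiv

section BlockOperators

variable {𝕜 : Type*} [NontriviallyNormedField 𝕜] {X Y : Type*} [NormedAddCommGroup X]
  [NormedSpace 𝕜 X] [NormedAddCommGroup Y] [NormedSpace 𝕜 Y]

noncomputable def blockOp (a : X →L[𝕜] X) (b : Y →L[𝕜] X) (c : X →L[𝕜] Y) (d : Y →L[𝕜] Y) :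
    X × Y →L[𝕜] X × Y :=
  (a.coprod b).prod (c.coprod d)

@[simp] lemma blockOp_apply (a : X →L[𝕜] X) (b : Y →L[𝕜] X) (c : X →L[𝕜] Y) (d : Y →L[𝕜] Y)
    (z : X × Y) : blockOp a b c d z = (a z.1 + b z.2, c z.1 + d z.2) := rfl

lemma blockOp_eq_prodMapL_add (a : X →L[𝕜] X) (b : Y →L[𝕜] X) (c : X →L[𝕜] Y)
    (d : Y →L[𝕜] Y) : blockOp a b c d = prodMapL 𝕜 X X Y Y (a, 0) + blockOp 0 b c d := by
  ext <;> simp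

lemma blockOp_mul_blockOp (a a' : X →L[𝕜] X) (b b' : Y →L[𝕜] X) (c c' : X →L[𝕜] Y)
    (d d' : Y →L[𝕜] Y) :
    blockOp a b c d * blockOp a' b' c' d' =
      blockOp (a ∘L a' + b ∘L c') (a ∘L b' + b ∘L d') (c ∘L a' + d ∘L c') (c ∘L b' + d ∘L d') := by
  ext <;> simp

noncomputable def bottomRightL : (X × Y →L[𝕜] X × Y) →L[𝕜] (Y →L[𝕜] Y) :=
  (compL 𝕜 Y (X × Y) Y (snd 𝕜 X Y)).comp ((compL 𝕜 Y (X × Y) (X × Y)).flip (inr 𝕜 X Y))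

@[simp] lemma bottomRightL_blockOp (a : X →L[𝕜] X) (b : Y →L[𝕜] X) (c : X →L[𝕜] Y)
    (d : Y →L[𝕜] Y) : bottomRightL (blockOp a b c d) = d := by
  ext; simp [bottomRightL]

end BlockOperators

section Grushin

variable {X Y : Type*} [NormedAddCommGroup X] [NormedSpace ℂ X] [NormedAddCommGroup Y]
  [NormedSpace ℂ Y]

lemma hasDerivAt_blockOp_left {a : ℝ → X →L[ℂ] X} {a' : X →L[ℂ] X} {t : ℝ} (b : Y →L[ℂ] X)
    (c : X →L[ℂ] Y) (d : Y →L[ℂ] Y) (ha : HasDerivAt a a' t) :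
    HasDerivAt (fun s => blockOp (a s) b c d) (blockOp a' 0 0 0) t := by
  have h := (((prodMapL ℂ X X Y Y).restrictScalars ℝ).hasFDerivAt.comp_hasDerivAt t
    (ha.prodMk (hasDerivAt_const t 0))).add (hasDerivAt_const t (blockOp 0 b c d))
  exact (h.congr_of_eventuallyEq (.of_forall fun s => blockOp_eq_prodMapL_add _ b c d)).congr_deriv
    (by ext <;> simp)

lemma ContDiffOn.blockOp_left {a : ℝ → X →L[ℂ] X} {U : Set ℝ} {n : WithTop ℕ∞} (b : Y →L[ℂ] X)
    (c : X →L[ℂ] Y) (d : Y →L[ℂ] Y) (ha : ContDiffOn ℝ n a U) :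
    ContDiffOn ℝ n (fun s => blockOp (a s) b c d) U := by
  have h := (((prodMapL ℂ X X Y Y).restrictScalars ℝ).contDiff.comp_contDiffOn
    (ha.prodMk (contDiffOn_const (c := (0 : Y →L[ℂ] Y))))).add
    (contDiffOn_const (c := blockOp 0 b c d))
  exact h.congr fun s _ => blockOp_eq_prodMapL_add _ b c d

variable {P E : X →L[ℂ] X} {Rm Ep : Y →L[ℂ] X} {Rp Em : X →L[ℂ] Y} {Emp : Y →L[ℂ] Y}

lemma blockOp_mul_grushin_eq_one
    (h : ∀ u um, E (P u + Rm um) + Ep (Rp u) = u ∧ Em (P u + Rm um) + Emp (Rp u) = um) :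
    blockOp E Ep Em Emp * blockOp P Rm Rp 0 = 1 := by
  refine ContinuousLinearMap.ext fun z => ?_
  simpa [Prod.ext_iff] using h z.1 z.2

lemma grushin_mul_blockOp_eq_one
    (h : ∀ v vp, P (E v + Ep vp) + Rm (Em v + Emp vp) = v ∧ Rp (E v + Ep vp) = vp) :
    blockOp P Rm Rp 0 * blockOp E Ep Em Emp = 1 := by
  refine ContinuousLinearMap.ext fun z => ?_
  simpa [Prod.ext_iff] using h z.1 z.2

end Grushin

theorem grushin_Emp_derivatives_general
    {X : Type*} [NormedAddCommGroup X] [NormedSpace ℂ X] [CompleteSpace X]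
    (m : ℕ)
    (Rm : (Fin m → ℂ) →L[ℂ] X) (Rp : X →L[ℂ] (Fin m → ℂ))
    (I : Set ℝ) (hI : IsOpen I) (h0 : (0 : ℝ) ∈ I)
    (P : ℝ → (X →L[ℂ] X)) (hP : ContDiffOn ℝ 2 P I)
    (E : ℝ → (X →L[ℂ] X)) (Ep : ℝ → ((Fin m → ℂ) →L[ℂ] X))
    (Em : ℝ → (X →L[ℂ] (Fin m → ℂ))) (Emp : ℝ → ((Fin m → ℂ) →L[ℂ] (Fin m → ℂ)))
    (hwp : ∀ s ∈ I,
      (∀ (u : X) (um : Fin m → ℂ),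
        E s (P s u + Rm um) + Ep s (Rp u) = u ∧
          Em s (P s u + Rm um) + Emp s (Rp u) = um) ∧
      (∀ (v : X) (vp : Fin m → ℂ),
        P s (E s v + Ep s vp) + Rm (Em s v + Emp s vp) = v ∧
          Rp (E s v + Ep s vp) = vp)) :
    ContDiffOn ℝ 2 Emp I ∧
    deriv Emp 0 = -((Em 0).comp ((deriv P 0).comp (Ep 0))) ∧
    deriv (deriv Emp) 0 =
      (2 : ℂ) • ((Em 0).comp ((deriv P 0).comp ((E 0).comp ((deriv P 0).comp (Ep 0)))))
        - (Em 0).comp ((deriv (deriv P) 0).comp (Ep 0)) := by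
  set p : ℝ → _ := fun s => blockOp (P s) Rm Rp 0
  set q : ℝ → _ := fun s => blockOp (E s) (Ep s) (Em s) (Emp s)
  have hinv : ∀ s ∈ I, q s * p s = 1 ∧ p s * q s = 1 := fun s hs =>
    ⟨blockOp_mul_grushin_eq_one (hwp s hs).1, grushin_mul_blockOp_eq_one (hwp s hs).2⟩
  have hP' : ∀ s ∈ I, HasDerivAt P (deriv P s) s := fun s hs =>
    ((hP.contDiffAt (hI.mem_nhds hs)).differentiableAt two_ne_zero).hasDerivAt
  have hP'' : HasDerivAt (deriv P) (deriv (deriv P) 0) 0 :=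
    (((hP.deriv_of_isOpen hI (m := 1) (by norm_num)).contDiffAt
      (hI.mem_nhds h0)).differentiableAt one_ne_zero).hasDerivAt
  have hp' : ∀ s ∈ I, HasDerivAt p (blockOp (deriv P s) 0 0 0) s := fun s hs =>
    hasDerivAt_blockOp_left Rm Rp 0 (hP' s hs)
  have hq' : ∀ s ∈ I, HasDerivAt q (-(q s * blockOp (deriv P s) 0 0 0 * q s)) s := fun s hs =>
    hasDerivAt_of_mul_eq_one (hI.mem_nhds hs) hinv (hp' s hs)
  have hq'' := hasDerivAt_deriv_of_mul_eq_one hI h0 hinv hp' (hasDerivAt_blockOp_left 0 0 0 hP'')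
  set L := (bottomRightL (𝕜 := ℂ) (X := X) (Y := Fin m → ℂ)).restrictScalars ℝ
  have hEmp : Emp = fun s => L (q s) := by
    funext s
    simp [q, L]
  refine ⟨?_, ?_, ?_⟩
  · rw [hEmp]
    exact L.contDiff.comp_contDiffOn (contDiffOn_of_mul_eq_one (hP.blockOp_left Rm Rp 0) hinv)
  · have hd : HasDerivAt (fun s => L (q s)) _ 0 := L.hasFDerivAt.comp_hasDerivAt 0 (hq' 0 h0)
    rw [hEmp, hd.deriv]
    simp [blockOp_mul_blockOp, L, q, comp_assoc]
  · have hq_diff : ∀ᶠ s in 𝓝 0, DifferentiableAt ℝ q s :=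
      eventually_of_mem (hI.mem_nhds h0) fun s hs => (hq' s hs).differentiableAt
    rw [hEmp, (hasDerivAt_deriv_clm_comp L hq_diff hq'').deriv]
    simp [blockOp_mul_blockOp, L, q, two_mul, comp_assoc]
    exact (two_smul ℂ _).symm

/-- **Derivatives of the effective Hamiltonian `E₋₊(s)` of a C² family of Grushin
problems.** If `s ↦ P(s)` is C² on an open interval `I ∋ 0` and for each `s ∈ I`
the Grushin problem `𝒫(s)(u, u₋) = (P(s)u + R₋u₋, R₊u)` is well-posed with inverse
blocks `E(s), E₊(s), E₋(s), E₋₊(s)`, then `E₋₊` is C² on `I`,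
`E₋₊'(0) = −E₋ Ṗ E₊` and `E₋₊''(0) = 2 E₋ Ṗ E Ṗ E₊ − E₋ P̈ E₊`. -/
theorem grushin_Emp_derivatives
    {X : Type*} [NormedAddCommGroup X] [NormedSpace ℂ X] [CompleteSpace X]
    (m : ℕ) (hm : 1 ≤ m)
    (Rm : (Fin m → ℂ) →L[ℂ] X) (Rp : X →L[ℂ] (Fin m → ℂ))
    (I : Set ℝ) (hI : IsOpen I) (h0 : (0 : ℝ) ∈ I) (hconn : I.OrdConnected)
    (P : ℝ → (X →L[ℂ] X)) (hP : ContDiffOn ℝ 2 P I)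
    (E : ℝ → (X →L[ℂ] X)) (Ep : ℝ → ((Fin m → ℂ) →L[ℂ] X))
    (Em : ℝ → (X →L[ℂ] (Fin m → ℂ))) (Emp : ℝ → ((Fin m → ℂ) →L[ℂ] (Fin m → ℂ)))
    (hwp : ∀ s ∈ I,
      (∀ (u : X) (um : Fin m → ℂ),
        E s (P s u + Rm um) + Ep s (Rp u) = u ∧
          Em s (P s u + Rm um) + Emp s (Rp u) = um) ∧
      (∀ (v : X) (vp : Fin m → ℂ),
        P s (E s v + Ep s vp) + Rm (Em s v + Emp s vp) = v ∧
          Rp (E s v + Ep s vp) = vp)) :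
    ContDiffOn ℝ 2 Emp I ∧
    deriv Emp 0 = -((Em 0).comp ((deriv P 0).comp (Ep 0))) ∧
    deriv (deriv Emp) 0 =
      (2 : ℂ) • ((Em 0).comp ((deriv P 0).comp ((E 0).comp ((deriv P 0).comp (Ep 0)))))
        - (Em 0).comp ((deriv (deriv P) 0).comp (Ep 0)) :=
  grushin_Emp_derivatives_general m Rm Rp I hI h0 P hP E Ep Em Emp hwp
end

section
/- Let V_m(ξ) = 2 sin²(πξ/2) e^{−(ξ−1)²} and V_a(ξ) = 5(ξ−1) e^{−ξ²} for ξ ∈ ℤ, and let P̂ be the associated operator on ℓ²(ℤ²; ℂ). Then P̂ δ_{(1,0)} = 0; that is, 0 is an eigenvalue of P̂ with eigenvector δ_{(1,0)}. -/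
/-!
`P̂ δ_k` is supported on `k` and its two neighbours `k ± (1, 0)`. Its value at `k` is the diagonal
symbol `k₂ ⟨k⟩⁻¹ + V_a(k₁)`, and at `k ± (1, 0)` it is a multiple of `2 − V_m(k₁) − V_m(k₁ ± 1)`.
For `k = (1, 0)` all three vanish: `V_a(1) = 0`, and `V_m(1) = 2`, `V_m(0) = V_m(2) = 0`.
-/

/-- The Fourier-side representation of the 0th order operator
`P = ⟨D⟩⁻¹ D_{x₂} + sin x₁ (I − V_m(D_{x₁})) + (I − V_m(D_{x₁})) sin x₁ + V_a(D_{x₁})`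
on `𝕋²`, acting on sequences indexed by `ℤ²`. -/
noncomputable def PhatOp (Vm Va : ℤ → ℝ) (a : ℤ × ℤ → ℂ) : ℤ × ℤ → ℂ := fun n =>
  (((n.2 : ℝ) / Real.sqrt (1 + (n.1 : ℝ) ^ 2 + (n.2 : ℝ) ^ 2) + Va n.1 : ℝ) : ℂ) * a n
    + (((2 - Vm (n.1 - 1) - Vm n.1 : ℝ) : ℂ) / (2 * Complex.I)) * a (n.1 - 1, n.2)
    - (((2 - Vm n.1 - Vm (n.1 + 1) : ℝ) : ℂ) / (2 * Complex.I)) * a (n.1 + 1, n.2)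

/-- The delta sequence at `k ∈ ℤ²`. -/
def deltaSeq (k : ℤ × ℤ) : ℤ × ℤ → ℂ := fun n => if n = k then 1 else 0

/-- `V_m(ξ) = 2 sin²(πξ/2) e^{−(ξ−1)²}`. -/
noncomputable def VmEx1 (ξ : ℤ) : ℝ :=
  2 * Real.sin (Real.pi * (ξ : ℝ) / 2) ^ 2 * Real.exp (-((ξ : ℝ) - 1) ^ 2)

/-- `V_a(ξ) = 5(ξ−1) e^{−ξ²}`. -/
noncomputable def VaEx1 (ξ : ℤ) : ℝ :=
  5 * ((ξ : ℝ) - 1) * Real.exp (-(ξ : ℝ) ^ 2)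

theorem PhatOp_deltaSeq_eq_zero {Vm Va : ℤ → ℝ} {k : ℤ × ℤ}
    (hdiag : (k.2 : ℝ) / Real.sqrt (1 + (k.1 : ℝ) ^ 2 + (k.2 : ℝ) ^ 2) + Va k.1 = 0)
    (hleft : Vm (k.1 - 1) + Vm k.1 = 2) (hright : Vm k.1 + Vm (k.1 + 1) = 2) :
    PhatOp Vm Va (deltaSeq k) = 0 := by
  obtain ⟨k₁, k₂⟩ := k
  funext ⟨n₁, n₂⟩
  simp only [PhatOp, deltaSeq, Prod.mk.injEq, Pi.zero_apply] at *
  rcases eq_or_ne n₂ k₂ with rfl | hn₂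
  · obtain rfl | rfl | rfl | ⟨hmid, hlo, hhi⟩ :
        n₁ = k₁ ∨ n₁ = k₁ + 1 ∨ n₁ = k₁ - 1 ∨ (n₁ ≠ k₁ ∧ n₁ - 1 ≠ k₁ ∧ n₁ + 1 ≠ k₁) := by omega
    · simp [hdiag]
    · have : 2 - Vm k₁ - Vm (k₁ + 1) = 0 := by linarith
      simp [this, show k₁ + 1 + 1 ≠ k₁ by omega]
    · have : 2 - Vm (k₁ - 1) - Vm k₁ = 0 := by linarith
      simp [this, show k₁ - 1 - 1 ≠ k₁ by omega]
    · simp [hmid, hlo, hhi]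
  · simp [hn₂]

lemma VmEx1_zero : VmEx1 0 = 0 := by
  simp [VmEx1]

lemma VmEx1_one : VmEx1 1 = 2 := by
  simp [VmEx1, Real.sin_pi_div_two]

lemma VmEx1_two : VmEx1 2 = 0 := by
  have : Real.pi * (2 : ℝ) / 2 = Real.pi := by ring
  simp [VmEx1, this, Real.sin_pi]

lemma VaEx1_one : VaEx1 1 = 0 := by
  simp [VaEx1]

/-- **Example 1 of the paper:** `0` is an eigenvalue of `P̂` with eigenvector
`δ_{(1,0)}` (i.e. eigenfunction `e^{ix₁}/2π` of `P`). -/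
theorem Phat_ex1_eigenvalue_zero : PhatOp VmEx1 VaEx1 (deltaSeq (1, 0)) = 0 := by
  apply PhatOp_deltaSeq_eq_zero <;> norm_num [VmEx1_zero, VmEx1_one, VmEx1_two, VaEx1_one]
end

section
/- Let V_m(ξ) = 2 sin²(πξ/2) e^{−(ξ²−1)²} and V_a(ξ) = 6(1−ξ²) e^{−(ξ−1)²} for ξ ∈ ℤ, and let P̂ be the associated operator on ℓ²(ℤ²; ℂ). Then P̂ δ_{(1,0)} = 0 and P̂ δ_{(−1,0)} = 0; in particular 0 is an eigenvalue of P̂ whose eigenspace has dimension at least 2. -/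
/-- `V_m(ξ) = 2 sin²(πξ/2) e^{−(ξ²−1)²}`. -/
noncomputable def VmEx2 (ξ : ℤ) : ℝ :=
  2 * Real.sin (Real.pi * (ξ : ℝ) / 2) ^ 2 * Real.exp (-((ξ : ℝ) ^ 2 - 1) ^ 2)

/-- `V_a(ξ) = 6(1−ξ²) e^{−(ξ−1)²}`. -/
noncomputable def VaEx2 (ξ : ℤ) : ℝ :=
  6 * (1 - (ξ : ℝ) ^ 2) * Real.exp (-((ξ : ℝ) - 1) ^ 2)

/-! `P̂ δ_{(k,0)}` only involves `δ_{(k,0)}` and `δ_{(k±1,0)}`, with coefficients `V_a(k)` and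
`2 − V_m(k) − V_m(k ± 1)`. For `k = ±1` all three vanish: `V_a(±1) = 0`, while `V_m` is `0` on
even integers (where `sin(πξ/2) = 0`) and `2` at `±1`. -/

lemma deltaSeq_eq_single (k : ℤ × ℤ) : deltaSeq k = Pi.single k 1 := by
  ext n
  simp [deltaSeq, Pi.single_apply]

lemma linearIndependent_deltaSeq : LinearIndependent ℂ deltaSeq := by
  simpa only [← deltaSeq_eq_single] using Pi.linearIndependent_single_one (ℤ × ℤ) ℂ

lemma PhatOp_deltaSeq (Vm Va : ℤ → ℝ) (k : ℤ) :
    PhatOp Vm Va (deltaSeq (k, 0)) =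
      ((Va k : ℝ) : ℂ) • deltaSeq (k, 0)
        + (((2 - Vm k - Vm (k + 1) : ℝ) : ℂ) / (2 * Complex.I)) • deltaSeq (k + 1, 0)
        - (((2 - Vm (k - 1) - Vm k : ℝ) : ℂ) / (2 * Complex.I)) • deltaSeq (k - 1, 0) := by
  ext ⟨x, y⟩
  simp only [PhatOp, deltaSeq, Prod.mk.injEq, Pi.sub_apply, Pi.add_apply, Pi.smul_apply,
    smul_eq_mul]
  split_ifs <;> simp_all <;> omega

lemma PhatOp_deltaSeq_eq_zero_s7 {Vm Va : ℤ → ℝ} {k : ℤ} (hVa : Va k = 0)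
    (hVm_left : Vm (k - 1) + Vm k = 2) (hVm_right : Vm k + Vm (k + 1) = 2) :
    PhatOp Vm Va (deltaSeq (k, 0)) = 0 := by
  rw [PhatOp_deltaSeq, hVa, show 2 - Vm k - Vm (k + 1) = 0 by linarith,
    show 2 - Vm (k - 1) - Vm k = 0 by linarith]
  simp

lemma VmEx2_neg (ξ : ℤ) : VmEx2 (-ξ) = VmEx2 ξ := by
  simp [VmEx2, neg_div, Real.sin_neg]

lemma VmEx2_two_mul (m : ℤ) : VmEx2 (2 * m) = 0 := by
  have : Real.pi * ((2 * m : ℤ) : ℝ) / 2 = m * Real.pi := by push_cast; ring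
  rw [VmEx2, this, Real.sin_int_mul_pi]
  simp

lemma VmEx2_one : VmEx2 1 = 2 := by
  simp [VmEx2]

lemma VaEx2_eq_zero_of_sq_eq_one {ξ : ℤ} (h : ξ ^ 2 = 1) : VaEx2 ξ = 0 := by
  simp [VaEx2, show (ξ : ℝ) ^ 2 = 1 by exact_mod_cast h]

/-- **Example 2 of the paper:** `0` is an eigenvalue of `P̂` with multiplicity at
least `2`: both `δ_{(1,0)}` and `δ_{(−1,0)}` are in the kernel, and they are
linearly independent. -/
theorem Phat_ex2_eigenvalue_zero_multiplicity_two :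
    PhatOp VmEx2 VaEx2 (deltaSeq (1, 0)) = 0 ∧
    PhatOp VmEx2 VaEx2 (deltaSeq (-1, 0)) = 0 ∧
    LinearIndependent ℂ ![deltaSeq (1, 0), deltaSeq (-1, 0)] := by
  have hVm_zero : VmEx2 0 = 0 := by simpa using VmEx2_two_mul 0
  have hVm_two : VmEx2 2 = 0 := by simpa using VmEx2_two_mul 1
  have hVm_neg_two : VmEx2 (-2) = 0 := by simpa using VmEx2_two_mul (-1)
  have hVm_neg_one : VmEx2 (-1) = 2 := (VmEx2_neg 1).trans VmEx2_one
  refine ⟨?_, ?_, ?_⟩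
  · exact PhatOp_deltaSeq_eq_zero_s7 (k := 1) (VaEx2_eq_zero_of_sq_eq_one (by norm_num))
      (by norm_num [hVm_zero, VmEx2_one]) (by norm_num [hVm_two, VmEx2_one])
  · exact PhatOp_deltaSeq_eq_zero_s7 (k := -1) (VaEx2_eq_zero_of_sq_eq_one (by norm_num))
      (by norm_num [hVm_neg_two, hVm_neg_one]) (by norm_num [hVm_zero, hVm_neg_one])
  · convert linearIndependent_deltaSeq.comp ![(1, 0), (-1, 0)]
      (injective_pair_iff_ne.2 (by decide))
    ext i : 1
    fin_cases i <;> rfl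
end
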